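/- arXiv:2401.17102 — 3 statements merged into one kernel-verified Lean document; each statement's English description precedes it below -/
import Mathlib

section
/- Fix positive constants T₊, m₊, e, T₋ and a nonzero integer k; let α = k² + (ξ-kt)², h₁ = (1/4)α^{-1}∂ₜα with ∂ₜα = -2k(ξ-kt), and γ₊ = ((4πe²/m₊)·α/(α + 4πe²/T₋) + 2k²/α + T₊α/m₊)^{1/2}. Then |h₁(t)|/γ₊(t) ≤ √2/2 for every real t. -/
open Real

/-- |h₁(t)|/γ₊(t) ≤ √2/2 for the ion dynamics symmetrization. -/
theorem stmt_6 (Tp mp e Tm : ℝ) (hTp : 0 < Tp) (hmp : 0 < mp) (he : 0 < e) (hTm : 0 < Tm)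
    (k : ℤ) (hk : k ≠ 0) (ξ t : ℝ)
    (α h₁ γ : ℝ)
    (hα : α = (k : ℝ)^2 + (ξ - k * t)^2)
    (hh : h₁ = (1/4) * α⁻¹ * (-2 * (k : ℝ) * (ξ - k * t)))
    (hγ : γ = Real.sqrt ((4 * π * e^2 / mp) * (α / (α + 4 * π * e^2 / Tm)) +
      2 * (k : ℝ)^2 / α + Tp * α / mp)) :
    |h₁| / γ ≤ Real.sqrt 2 / 2 := by
  have hk' : (k : ℝ) ≠ 0 := by exact_mod_cast hk
  have hk2 : (0:ℝ) < (k:ℝ)^2 := by positivity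
  have hα0 : 0 < α := by rw [hα]; positivity
  have hπ : (0:ℝ) < π := Real.pi_pos
  set A : ℝ := (4 * π * e^2 / mp) * (α / (α + 4 * π * e^2 / Tm)) +
      2 * (k : ℝ)^2 / α + Tp * α / mp with hA
  have hA1 : 2 * (k:ℝ)^2 / α ≤ A := by
    have h1 : 0 ≤ (4 * π * e^2 / mp) * (α / (α + 4 * π * e^2 / Tm)) := by positivity
    have h2 : 0 ≤ Tp * α / mp := by positivity
    simp only [hA]; linarith
  have hApos : 0 < A := lt_of_lt_of_le (by positivity) hA1
  have hγpos : 0 < γ := by rw [hγ]; exact Real.sqrt_pos.mpr hApos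
  have hγsq : γ ^ 2 = A := by rw [hγ]; exact Real.sq_sqrt hApos.le
  rw [div_le_iff₀ hγpos]
  -- h₁^2 ≤ (√2/2 * γ)^2
  have hsq : h₁ ^ 2 ≤ (Real.sqrt 2 / 2 * γ) ^ 2 := by
    have h2 : (Real.sqrt 2) ^ 2 = 2 := Real.sq_sqrt (by norm_num)
    have : (Real.sqrt 2 / 2 * γ) ^ 2 = A / 2 := by
      rw [mul_pow, div_pow, h2, hγsq]; ring
    rw [this]
    have hub : (ξ - k * t)^2 ≤ α := by rw [hα]; nlinarith
    have hh2 : h₁ ^ 2 = (k:ℝ)^2 * (ξ - k * t)^2 / (4 * α^2) := by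
      rw [hh]; field_simp; ring
    have hkey : (k:ℝ)^2 * (ξ - k * t)^2 / (4 * α^2) ≤ (k:ℝ)^2 / α := by
      rw [div_le_div_iff₀ (by positivity) hα0]
      nlinarith [mul_le_mul_of_nonneg_left hub (by positivity : (0:ℝ) ≤ (k:ℝ)^2 * α), sq_nonneg α, mul_pos hk2 hα0]
    have : (k:ℝ)^2 / α ≤ A / 2 := by
      have h := hA1; rw [mul_div_assoc] at h; linarith
    linarith [hh2 ▸ hkey.trans this]
  have hc : 0 ≤ Real.sqrt 2 / 2 * γ := by positivity
  nlinarith [sq_abs h₁, abs_nonneg h₁, hsq, hc]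
end

section
/- Fix positive constants m₋, e and a nonzero integer k; let α = k² + (ξ-kt)², h₂ = (1/4)α^{-1}∂ₜα with ∂ₜα = -2k(ξ-kt), and γ₋ = (4πe²/m₋ + 2k²/α + α/m₋)^{1/2}. Then |h₂(t)|/γ₋(t) ≤ √2/4 for every real t. -/
open Real

/-- |h₂(t)|/γ₋(t) ≤ √2/4 for the electron dynamics symmetrization. -/
theorem stmt_7 (mm e : ℝ) (hmm : 0 < mm) (he : 0 < e)
    (k : ℤ) (hk : k ≠ 0) (ξ t : ℝ)
    (α h₂ γ : ℝ)
    (hα : α = (k : ℝ)^2 + (ξ - k * t)^2)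
    (hh : h₂ = (1/4) * α⁻¹ * (-2 * (k : ℝ) * (ξ - k * t)))
    (hγ : γ = Real.sqrt (4 * π * e^2 / mm + 2 * (k : ℝ)^2 / α + α / mm)) :
    |h₂| / γ ≤ Real.sqrt 2 / 4 := by
  have hk0 : (k : ℝ) ≠ 0 := Int.cast_ne_zero.mpr hk
  set b := ξ - k * t with hb
  have hαpos : 0 < α := by rw [hα]; positivity
  set s := Real.sqrt α with hs
  have hspos : 0 < s := Real.sqrt_pos.mpr hαpos
  have hs2 : s ^ 2 = α := Real.sq_sqrt hαpos.le
  have hbs : |b| ≤ s := by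
    have hb2 : b ^ 2 ≤ α := by rw [hα]; nlinarith [sq_nonneg (k : ℝ)]
    calc |b| = Real.sqrt (b ^ 2) := (Real.sqrt_sq_eq_abs b).symm
      _ ≤ s := Real.sqrt_le_sqrt hb2
  have hkpos : 0 < |(k : ℝ)| := abs_pos.mpr hk0
  have hh' : h₂ = -((k : ℝ) * b) / (2 * α) := by
    rw [hh]; field_simp; ring
  have hh2 : |h₂| = |(k : ℝ)| * |b| / (2 * α) := by
    rw [hh', abs_div, abs_neg, abs_mul, abs_of_pos (by positivity : (0:ℝ) < 2 * α)]
  have key1 : |h₂| ≤ |(k : ℝ)| / (2 * s) := by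
    rw [hh2, ← hs2, div_le_div_iff₀ (by positivity) (by positivity)]
    nlinarith [mul_nonneg (abs_nonneg (k:ℝ)) hspos.le, abs_nonneg b]
  have h1 : Real.sqrt (2 * (k : ℝ) ^ 2 / α) = Real.sqrt 2 * |(k : ℝ)| / s := by
    rw [Real.sqrt_div (by positivity), Real.sqrt_mul (by norm_num), Real.sqrt_sq_eq_abs]
  have hγlb : Real.sqrt 2 * |(k : ℝ)| / s ≤ γ := by
    rw [hγ, ← h1]
    apply Real.sqrt_le_sqrt
    have hp1 : 0 ≤ 4 * π * e ^ 2 / mm := by positivity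
    have hp2 : 0 ≤ α / mm := by positivity
    linarith
  have hγpos : 0 < γ := lt_of_lt_of_le (by positivity) hγlb
  calc |h₂| / γ ≤ (|(k : ℝ)| / (2 * s)) / (Real.sqrt 2 * |(k : ℝ)| / s) :=
        div_le_div₀ (by positivity) key1 (by positivity) hγlb
    _ = Real.sqrt 2 / 4 := by
        have h2 : Real.sqrt 2 * Real.sqrt 2 = 2 := Real.mul_self_sqrt (by norm_num)
        have hr2 : Real.sqrt 2 ≠ 0 := by positivity
        field_simp
        linear_combination (-2) * h2
end

section
/- Suppose A₁, A₂ : [0,∞) → ℂ are differentiable and satisfy λ·A₁' = −h·λ·A₁ − γ·A₂ and λ^{-1}·A₂' = γ·A₁ + h·λ^{-1}·A₂, where λ, γ > 0 and h are real-valued differentiable functions of t. Then (d/dt)[λ|A₁|² + (2h/γ)·Re(A₁·conj(A₂)) + λ^{-1}|A₂|²] = λ|A₁|²·(log λ)' + 2Re(A₁·conj(A₂))·(h/γ)' − λ^{-1}|A₂|²·(log λ)'. -/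
/-- Evolution identity for the symmetrized energy: if λA₁' = −hλA₁ − γA₂ and
λ⁻¹A₂' = γA₁ + hλ⁻¹A₂, then
(d/dt)[λ|A₁|² + (2h/γ)Re(A₁ conj A₂) + λ⁻¹|A₂|²]
  = λ|A₁|²(log λ)' + 2Re(A₁ conj A₂)(h/γ)' − λ⁻¹|A₂|²(log λ)'. -/
theorem stmt_16 (lam γ h : ℝ → ℝ) (A₁ A₂ d₁ d₂ : ℝ → ℂ)
    (hlam_pos : ∀ t, 0 < lam t) (hγ_pos : ∀ t, 0 < γ t)
    (hlam : Differentiable ℝ lam) (hγd : Differentiable ℝ γ) (hhd : Differentiable ℝ h)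
    (hA₁ : ∀ t, HasDerivAt A₁ (d₁ t) t) (hA₂ : ∀ t, HasDerivAt A₂ (d₂ t) t)
    (heq1 : ∀ t, (lam t : ℂ) * d₁ t = -((h t : ℂ)) * (lam t : ℂ) * A₁ t - (γ t : ℂ) * A₂ t)
    (heq2 : ∀ t, ((lam t : ℂ))⁻¹ * d₂ t = (γ t : ℂ) * A₁ t + (h t : ℂ) * ((lam t : ℂ))⁻¹ * A₂ t) :
    ∀ t, HasDerivAt
      (fun s => lam s * ‖A₁ s‖^2 + (2 * h s / γ s) * (A₁ s * starRingEnd ℂ (A₂ s)).re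
        + (lam s)⁻¹ * ‖A₂ s‖^2)
      (lam t * ‖A₁ t‖^2 * deriv (fun s => Real.log (lam s)) t
        + 2 * (A₁ t * starRingEnd ℂ (A₂ t)).re * deriv (fun s => h s / γ s) t
        - (lam t)⁻¹ * ‖A₂ t‖^2 * deriv (fun s => Real.log (lam s)) t) t := by
  intro t
  have hl0 : lam t ≠ 0 := (hlam_pos t).ne'
  have hg0 : γ t ≠ 0 := (hγ_pos t).ne'
  have hl0c : (lam t : ℂ) ≠ 0 := by exact_mod_cast hl0
  -- solve for d₁, d₂
  have hd₁ : d₁ t = -(h t : ℂ) * A₁ t - ((γ t : ℂ) / (lam t : ℂ)) * A₂ t := by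
    have h1 := heq1 t
    field_simp
    linear_combination h1
  have hd₂ : d₂ t = (γ t : ℂ) * (lam t : ℂ) * A₁ t + (h t : ℂ) * A₂ t := by
    have h2 := heq2 t
    field_simp at h2
    linear_combination h2
  -- derivatives of log lam and h/γ
  have hlog : HasDerivAt (fun s => Real.log (lam s)) (deriv lam t / lam t) t :=
    ((hlam t).hasDerivAt).log hl0
  have hquot : HasDerivAt (fun s => h s / γ s)
      ((deriv h t * γ t - h t * deriv γ t) / (γ t)^2) t :=
    ((hhd t).hasDerivAt).div ((hγd t).hasDerivAt) hg0
  rw [hlog.deriv, hquot.deriv]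
  -- conjugates
  have hc₁ : HasDerivAt (fun s => starRingEnd ℂ (A₁ s)) (starRingEnd ℂ (d₁ t)) t := by
    have := (Complex.conjCLE.toContinuousLinearMap.hasFDerivAt).comp_hasDerivAt t (hA₁ t)
    simpa [Function.comp_def] using this
  have hc₂ : HasDerivAt (fun s => starRingEnd ℂ (A₂ s)) (starRingEnd ℂ (d₂ t)) t := by
    have := (Complex.conjCLE.toContinuousLinearMap.hasFDerivAt).comp_hasDerivAt t (hA₂ t)
    simpa [Function.comp_def] using this
  -- products and real parts
  have hp₁ : HasDerivAt (fun s => ((A₁ s * starRingEnd ℂ (A₁ s)).re : ℝ))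
      ((d₁ t * starRingEnd ℂ (A₁ t) + A₁ t * starRingEnd ℂ (d₁ t)).re) t := by
    have := (Complex.reCLM.hasFDerivAt).comp_hasDerivAt t ((hA₁ t).mul hc₁)
    simpa only [Function.comp_def, Pi.mul_apply, Complex.reCLM_apply] using this
  have hp₂ : HasDerivAt (fun s => ((A₂ s * starRingEnd ℂ (A₂ s)).re : ℝ))
      ((d₂ t * starRingEnd ℂ (A₂ t) + A₂ t * starRingEnd ℂ (d₂ t)).re) t := by
    have := (Complex.reCLM.hasFDerivAt).comp_hasDerivAt t ((hA₂ t).mul hc₂)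
    simpa only [Function.comp_def, Pi.mul_apply, Complex.reCLM_apply] using this
  have hp₁₂ : HasDerivAt (fun s => ((A₁ s * starRingEnd ℂ (A₂ s)).re : ℝ))
      ((d₁ t * starRingEnd ℂ (A₂ t) + A₁ t * starRingEnd ℂ (d₂ t)).re) t := by
    have := (Complex.reCLM.hasFDerivAt).comp_hasDerivAt t ((hA₁ t).mul hc₂)
    simpa only [Function.comp_def, Pi.mul_apply, Complex.reCLM_apply] using this
  -- the three terms
  have hT1 : HasDerivAt (fun s => lam s * ((A₁ s * starRingEnd ℂ (A₁ s)).re))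
      (deriv lam t * ((A₁ t * starRingEnd ℂ (A₁ t)).re)
        + lam t * ((d₁ t * starRingEnd ℂ (A₁ t) + A₁ t * starRingEnd ℂ (d₁ t)).re)) t :=
    ((hlam t).hasDerivAt).mul hp₁
  have hcoef : HasDerivAt (fun s => 2 * h s / γ s)
      (2 * ((deriv h t * γ t - h t * deriv γ t) / (γ t)^2)) t := by
    have : HasDerivAt (fun s => 2 * (h s / γ s))
        (2 * ((deriv h t * γ t - h t * deriv γ t) / (γ t)^2)) t := hquot.const_mul 2
    simpa [mul_div_assoc] using this
  have hT2 : HasDerivAt (fun s => (2 * h s / γ s) * ((A₁ s * starRingEnd ℂ (A₂ s)).re))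
      (2 * ((deriv h t * γ t - h t * deriv γ t) / (γ t)^2) * ((A₁ t * starRingEnd ℂ (A₂ t)).re)
        + (2 * h t / γ t) * ((d₁ t * starRingEnd ℂ (A₂ t) + A₁ t * starRingEnd ℂ (d₂ t)).re)) t :=
    hcoef.mul hp₁₂
  have hinv : HasDerivAt (fun s => (lam s)⁻¹) (-(deriv lam t) / (lam t)^2) t := by
    exact ((hlam t).hasDerivAt).inv hl0
  have hT3 : HasDerivAt (fun s => (lam s)⁻¹ * ((A₂ s * starRingEnd ℂ (A₂ s)).re))
      ((-(deriv lam t) / (lam t)^2) * ((A₂ t * starRingEnd ℂ (A₂ t)).re)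
        + (lam t)⁻¹ * ((d₂ t * starRingEnd ℂ (A₂ t) + A₂ t * starRingEnd ℂ (d₂ t)).re)) t :=
    hinv.mul hp₂
  have hsum := (hT1.add hT2).add hT3
  have hfun : (fun s => lam s * ‖A₁ s‖^2 + (2 * h s / γ s) * (A₁ s * starRingEnd ℂ (A₂ s)).re
        + (lam s)⁻¹ * ‖A₂ s‖^2)
      = (fun s => lam s * ((A₁ s * starRingEnd ℂ (A₁ s)).re)
        + (2 * h s / γ s) * ((A₁ s * starRingEnd ℂ (A₂ s)).re)
        + (lam s)⁻¹ * ((A₂ s * starRingEnd ℂ (A₂ s)).re)) := by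
    funext s
    simp [Complex.mul_conj, Complex.normSq_eq_norm_sq, ← Complex.ofReal_pow]
  rw [hfun]
  convert hsum using 1
  case e'_4 => rfl
  case e'_5 => rfl
  case e'_8 => rfl
  rw [hd₁, hd₂]
  have hn1 : ‖A₁ t‖^2 = ((A₁ t * starRingEnd ℂ (A₁ t)).re) := by
    simp [Complex.mul_conj, Complex.normSq_eq_norm_sq, ← Complex.ofReal_pow]
  have hn2 : ‖A₂ t‖^2 = ((A₂ t * starRingEnd ℂ (A₂ t)).re) := by
    simp [Complex.mul_conj, Complex.normSq_eq_norm_sq, ← Complex.ofReal_pow]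
  rw [hn1, hn2]
  simp only [map_add, map_sub, map_mul, map_neg, Complex.conj_ofReal, Complex.add_re,
    Complex.sub_re, Complex.mul_re, Complex.neg_re, Complex.neg_im, Complex.ofReal_re,
    Complex.ofReal_im, Complex.div_re, Complex.div_im, Complex.normSq_ofReal,
    map_div₀, Complex.conj_re, Complex.conj_im, Complex.mul_im, Complex.add_im, Complex.sub_im,
    Complex.inv_re, Complex.inv_im]
  set a := (A₁ t).re
  set b := (A₁ t).im
  set c := (A₂ t).re
  set d := (A₂ t).im
  field_simp
  ring
end
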